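/- Let P ⊂ ℝⁿ be a compact convex polytope containing the origin in its interior, h(m) = Σ_ρ q_{ε_ρ}(⟨m,u_ρ⟩ - c_ρ) the smoothing function with bump functions q_{ε_ρ} and ε_ρ ≤ -c_ρ. For each unit vector v, the function t ↦ h(tv) is monotone nondecreasing on {t ≥ 0 : tv ∈ P}, and for each δ ∈ (0,1) there is exactly one t with h(tv) = δ. Consequently the level set h⁻¹(δ) ∩ P is homeomorphic to the sphere S^{n-1} via the radial projection m ↦ m/|m|. -/
import Mathlib


open Set
open scoped RealInnerProductSpace

/-- The bump function `q_ε`. -/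
noncomputable def bump (ε : ℝ) (x : ℝ) : ℝ :=
  if x < ε then Real.exp (-(x ^ 2) / (ε ^ 2 * (ε ^ 2 - x ^ 2))) else 0

lemma bump_nonneg (ε x : ℝ) : 0 ≤ bump ε x := by
  unfold bump; split
  · exact (Real.exp_pos _).le
  · exact le_refl _

lemma bump_of_le {ε x : ℝ} (hx : ε ≤ x) : bump ε x = 0 := by
  unfold bump; rw [if_neg (not_lt.2 hx)]

lemma bump_zero {ε : ℝ} (hε : 0 < ε) : bump ε 0 = 1 := by
  unfold bump; rw [if_pos hε]; norm_num

lemma bump_lt {ε x y : ℝ} (hε : 0 < ε) (hy : 0 ≤ y) (hyx : y < x) (hx : x < ε) :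
    bump ε x < bump ε y := by
  unfold bump
  rw [if_pos hx, if_pos (lt_trans hyx hx)]
  apply Real.exp_lt_exp.2
  have hx2 : 0 < ε ^ 2 * (ε ^ 2 - x ^ 2) := by
    nlinarith [mul_pos (show (0:ℝ) < ε - x by linarith) (show (0:ℝ) < ε + x by linarith),
      mul_pos hε hε]
  have hy2 : 0 < ε ^ 2 * (ε ^ 2 - y ^ 2) := by
    nlinarith [mul_pos (show (0:ℝ) < ε - y by linarith) (show (0:ℝ) < ε + y by linarith),
      mul_pos hε hε]
  rw [div_lt_div_iff₀ hx2 hy2]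
  have h1 : y ^ 2 < x ^ 2 := by nlinarith
  nlinarith [mul_pos (sub_pos.2 h1) (pow_pos hε 4), mul_pos hε hε]

lemma bump_anti {ε x y : ℝ} (hε : 0 < ε) (hy : 0 ≤ y) (hyx : y ≤ x) :
    bump ε x ≤ bump ε y := by
  rcases eq_or_lt_of_le hyx with rfl | hyx
  · exact le_refl _
  rcases lt_or_ge x ε with hx | hx
  · exact (bump_lt hε hy hyx hx).le
  · rw [bump_of_le hx]; exact bump_nonneg ε y

lemma bump_eq_rpow {ε : ℝ} (hε : 0 < ε) {x : ℝ} (hx : -ε < x) :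
    bump ε x = (expNegInvGlue (ε ^ 2 * (ε ^ 2 - x ^ 2))) ^ (x ^ 2) := by
  rcases lt_or_ge x ε with hxε | hxε
  · have hpos : 0 < ε ^ 2 * (ε ^ 2 - x ^ 2) := by
      nlinarith [mul_pos (show (0:ℝ) < ε - x by linarith) (show (0:ℝ) < ε + x by linarith),
        mul_pos hε hε]
    unfold bump
    rw [if_pos hxε]
    rw [expNegInvGlue, if_neg (not_le.2 hpos), Real.rpow_def_of_pos (Real.exp_pos _),
      Real.log_exp]
    congr 1
    field_simp
  · have hx2 : ε ^ 2 ≤ x ^ 2 := by nlinarith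
    have hnp : ε ^ 2 * (ε ^ 2 - x ^ 2) ≤ 0 := by nlinarith [mul_pos hε hε]
    rw [bump_of_le hxε, expNegInvGlue.zero_of_nonpos hnp, Real.zero_rpow]
    exact ne_of_gt (by nlinarith)

lemma bump_continuous_aux (ε : ℝ) (hε : 0 < ε) :
    Continuous fun x : ℝ => (expNegInvGlue (ε ^ 2 * (ε ^ 2 - x ^ 2))) ^ (x ^ 2) := by
  rw [continuous_iff_continuousAt]
  intro x
  apply ContinuousAt.rpow
  · exact ((expNegInvGlue.contDiff (n := 0)).continuous.comp (by continuity)).continuousAt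
  · exact (continuous_pow 2).continuousAt
  · rcases eq_or_ne (expNegInvGlue (ε ^ 2 * (ε ^ 2 - x ^ 2))) 0 with hg | hg
    · right
      by_contra hx2
      push_neg at hx2
      have hx0 : x = 0 := by nlinarith [sq_nonneg x]
      rw [hx0] at hg
      have hp : (0:ℝ) < ε ^ 2 * (ε ^ 2 - 0 ^ 2) := by norm_num; positivity
      exact absurd hg (ne_of_gt (expNegInvGlue.pos_of_pos hp))
    · exact Or.inl hg

lemma bump_continuousOn {ε : ℝ} (hε : 0 < ε) :
    ContinuousOn (bump ε) (Set.Ioi (-ε)) :=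
  ((bump_continuous_aux ε hε).continuousOn).congr fun _ hx => bump_eq_rpow hε hx

lemma term_mono {ε cc a t₁ t₂ : ℝ} (hε : 0 < ε) (hεc : ε ≤ -cc) (ht₁ : 0 ≤ t₁)
    (h12 : t₁ ≤ t₂) (hx2 : cc ≤ t₂ * a) :
    bump ε (t₁ * a - cc) ≤ bump ε (t₂ * a - cc) := by
  rcases le_or_gt 0 a with ha | ha
  · have h1 : ε ≤ t₁ * a - cc := by nlinarith [mul_nonneg ht₁ ha]
    rw [bump_of_le h1]; exact bump_nonneg _ _
  · exact bump_anti hε (by linarith)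
      (by nlinarith [mul_nonneg (sub_nonneg.2 h12) (neg_nonneg.2 ha.le)])

theorem level_sets_are_spheres {n : ℕ} (hn : 1 ≤ n) {ι : Type*} [Fintype ι]
    (u : ι → EuclideanSpace ℝ (Fin n)) (c : ι → ℝ) (hc : ∀ ρ, c ρ < 0)
    (ε : ι → ℝ) (hεpos : ∀ ρ, 0 < ε ρ) (hεle : ∀ ρ, ε ρ ≤ -c ρ)
    (P : Set (EuclideanSpace ℝ (Fin n)))
    (hP : P = {m | ∀ ρ, c ρ ≤ ⟪m, u ρ⟫})
    (hPcompact : IsCompact P)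
    (h : EuclideanSpace ℝ (Fin n) → ℝ)
    (hh : h = fun m => ∑ ρ, bump (ε ρ) (⟪m, u ρ⟫ - c ρ)) :
    (∀ v : EuclideanSpace ℝ (Fin n), ‖v‖ = 1 →
      ∀ t₁ t₂ : ℝ, 0 ≤ t₁ → t₁ ≤ t₂ → t₂ • v ∈ P → h (t₁ • v) ≤ h (t₂ • v)) ∧
    (∀ v : EuclideanSpace ℝ (Fin n), ‖v‖ = 1 → ∀ δ ∈ Ioo (0 : ℝ) 1,
      ∃! t : ℝ, 0 ≤ t ∧ t • v ∈ P ∧ h (t • v) = δ) ∧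
    (∀ δ ∈ Ioo (0 : ℝ) 1,
      ∃ e : {m : EuclideanSpace ℝ (Fin n) // m ∈ P ∧ h m = δ} ≃ₜ
          Metric.sphere (0 : EuclideanSpace ℝ (Fin n)) 1,
        ∀ m, (e m : EuclideanSpace ℝ (Fin n)) = ‖(m : EuclideanSpace ℝ (Fin n))‖⁻¹ • (m : EuclideanSpace ℝ (Fin n))) := by
  subst hP hh
  -- basic rewriting lemma for inner products along rays
  have hrw : ∀ (t : ℝ) (v : (EuclideanSpace ℝ (Fin n))) ρ, ⟪t • v, u ρ⟫ = t * ⟪v, u ρ⟫ :=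
    fun t v ρ => real_inner_smul_left v (u ρ) t
  -- value at the origin
  have hzero : ∑ ρ, bump (ε ρ) (⟪(0 : (EuclideanSpace ℝ (Fin n))), u ρ⟫ - c ρ) = 0 := by
    apply Finset.sum_eq_zero
    intro ρ _
    rw [inner_zero_left, zero_sub, bump_of_le (hεle ρ)]
  have h0P : (0 : (EuclideanSpace ℝ (Fin n))) ∈ {m : (EuclideanSpace ℝ (Fin n)) | ∀ ρ, c ρ ≤ ⟪m, u ρ⟫} := by
    intro ρ; rw [inner_zero_left]; exact (hc ρ).le
  -- convexity of P
  have hconv : Convex ℝ {m : (EuclideanSpace ℝ (Fin n)) | ∀ ρ, c ρ ≤ ⟪m, u ρ⟫} := by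
    intro x hx y hy a b ha hb hab
    intro ρ
    show c ρ ≤ ⟪a • x + b • y, u ρ⟫
    rw [inner_add_left, real_inner_smul_left, real_inner_smul_left]
    have habc : a * c ρ + b * c ρ = c ρ := by rw [← add_mul, hab, one_mul]
    linarith [mul_le_mul_of_nonneg_left (hx ρ) ha, mul_le_mul_of_nonneg_left (hy ρ) hb]
  -- continuity of h on P
  have hcont : ContinuousOn (fun m : (EuclideanSpace ℝ (Fin n)) => ∑ ρ, bump (ε ρ) (⟪m, u ρ⟫ - c ρ))
      {m : (EuclideanSpace ℝ (Fin n)) | ∀ ρ, c ρ ≤ ⟪m, u ρ⟫} := by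
    apply continuousOn_finset_sum
    intro ρ _
    apply (bump_continuousOn (hεpos ρ)).comp
    · exact ((continuous_id.inner continuous_const).sub continuous_const).continuousOn
    · intro m hm
      have h1 := hm ρ
      have h2 := hεpos ρ
      simp only [mem_Ioi]
      linarith
  -- termwise monotonicity
  have mono : ∀ (v : (EuclideanSpace ℝ (Fin n))), ∀ t₁ t₂ : ℝ, 0 ≤ t₁ → t₁ ≤ t₂ →
      (∀ ρ, c ρ ≤ ⟪t₂ • v, u ρ⟫) → ∀ ρ,
      bump (ε ρ) (⟪t₁ • v, u ρ⟫ - c ρ) ≤ bump (ε ρ) (⟪t₂ • v, u ρ⟫ - c ρ) := by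
    intro v t₁ t₂ ht₁ h12 hP2 ρ
    rw [hrw, hrw]
    refine term_mono (hεpos ρ) (hεle ρ) ht₁ h12 ?_
    have := hP2 ρ
    rwa [hrw] at this
  -- the central existence-and-uniqueness statement
  have key : ∀ v : (EuclideanSpace ℝ (Fin n)), ‖v‖ = 1 → ∀ δ ∈ Ioo (0 : ℝ) 1,
      ∃! t : ℝ, 0 ≤ t ∧ (∀ ρ, c ρ ≤ ⟪t • v, u ρ⟫) ∧
        (∑ ρ, bump (ε ρ) (⟪t • v, u ρ⟫ - c ρ)) = δ := by
    intro v hv δ hδ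
    obtain ⟨R, hR⟩ := hPcompact.isBounded.subset_closedBall 0
    set S : Set ℝ := {t | 0 ≤ t ∧ ∀ ρ, c ρ ≤ ⟪t • v, u ρ⟫} with hSdef
    have hS0 : (0 : ℝ) ∈ S := by
      refine ⟨le_refl _, ?_⟩
      intro ρ; rw [zero_smul, inner_zero_left]; exact (hc ρ).le
    have hSsub : S ⊆ Icc 0 R := by
      intro t ht
      refine ⟨ht.1, ?_⟩
      have h1 : t • v ∈ Metric.closedBall (0 : (EuclideanSpace ℝ (Fin n))) R := hR ht.2
      rw [Metric.mem_closedBall, dist_zero_right, norm_smul, hv, mul_one] at h1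
      calc t ≤ |t| := le_abs_self t
      _ ≤ R := h1
    have hvcont : ∀ ρ, Continuous fun t : ℝ => ⟪t • v, u ρ⟫ :=
      fun ρ => (continuous_id.smul continuous_const).inner continuous_const
    have hSclosed : IsClosed S := by
      have : S = Ici 0 ∩ ⋂ ρ, {t : ℝ | c ρ ≤ ⟪t • v, u ρ⟫} := by
        ext t; simp [hSdef, mem_iInter, mem_Ici]
      rw [this]
      exact isClosed_Ici.inter (isClosed_iInter fun ρ =>
        isClosed_le continuous_const (hvcont ρ))
    have hScompact : IsCompact S := isCompact_Icc.of_isClosed_subset hSclosed hSsub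
    have hSbdd : BddAbove S := hScompact.bddAbove
    set T : ℝ := sSup S with hTdef
    have hTS : T ∈ S := hScompact.sSup_mem ⟨0, hS0⟩
    have hT0 : 0 ≤ T := hTS.1
    -- some constraint is tight at T
    have tight : ∃ ρ, ⟪T • v, u ρ⟫ = c ρ := by
      by_contra hcon
      push_neg at hcon
      have hO : IsOpen (⋂ ρ, {t : ℝ | c ρ < ⟪t • v, u ρ⟫}) :=
        isOpen_iInter_of_finite fun ρ => isOpen_lt continuous_const (hvcont ρ)
      have hTO : T ∈ ⋂ ρ, {t : ℝ | c ρ < ⟪t • v, u ρ⟫} :=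
        mem_iInter.2 fun ρ => (hTS.2 ρ).lt_of_ne (Ne.symm (hcon ρ))
      obtain ⟨r, hr, hball⟩ := Metric.isOpen_iff.1 hO T hTO
      have hmemball : T + r / 2 ∈ Metric.ball T r := by
        rw [Metric.mem_ball, Real.dist_eq, show T + r / 2 - T = r / 2 by ring,
          abs_of_pos (by linarith)]
        linarith
      have hmem : T + r / 2 ∈ S :=
        ⟨by linarith, fun ρ => (mem_iInter.1 (hball hmemball) ρ).le⟩
      have := le_csSup hSbdd hmem
      linarith
    have hge1 : 1 ≤ ∑ ρ, bump (ε ρ) (⟪T • v, u ρ⟫ - c ρ) := by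
      obtain ⟨ρ₀, hρ₀⟩ := tight
      calc (1 : ℝ) = bump (ε ρ₀) (⟪T • v, u ρ₀⟫ - c ρ₀) := by
            rw [hρ₀, sub_self, bump_zero (hεpos ρ₀)]
      _ ≤ ∑ ρ, bump (ε ρ) (⟪T • v, u ρ⟫ - c ρ) :=
            Finset.single_le_sum (f := fun ρ => bump (ε ρ) (⟪T • v, u ρ⟫ - c ρ))
              (fun ρ _ => bump_nonneg _ _) (Finset.mem_univ ρ₀)
    have hTpos : 0 < T := by
      rcases hT0.lt_or_eq with hTpos | hT0eq
      · exact hTpos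
      · exfalso
        rw [← hT0eq, zero_smul] at hge1
        rw [hzero] at hge1
        linarith
    -- the ray segment is inside P
    have hmaps : MapsTo (fun t : ℝ => t • v) (Icc 0 T) {m : (EuclideanSpace ℝ (Fin n)) | ∀ ρ, c ρ ≤ ⟪m, u ρ⟫} := by
      intro t ht
      have h1 : t / T ∈ Icc (0 : ℝ) 1 :=
        ⟨div_nonneg ht.1 hT0, (div_le_one hTpos).2 ht.2⟩
      have h2 := hconv.smul_mem_of_zero_mem h0P (hTS.2 : T • v ∈ _) h1
      rwa [smul_smul, div_mul_cancel₀ _ (ne_of_gt hTpos)] at h2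
    have gcont : ContinuousOn (fun t : ℝ => ∑ ρ, bump (ε ρ) (⟪t • v, u ρ⟫ - c ρ))
        (Icc 0 T) := by
      have := hcont.comp ((continuous_id.smul (continuous_const (y := v)))).continuousOn hmaps
      exact this
    -- existence via IVT
    have hivt := intermediate_value_Icc hT0 gcont
    have hδmem : δ ∈ Icc ((fun t : ℝ => ∑ ρ, bump (ε ρ) (⟪t • v, u ρ⟫ - c ρ)) 0)
        ((fun t : ℝ => ∑ ρ, bump (ε ρ) (⟪t • v, u ρ⟫ - c ρ)) T) := by
      constructor
      · show δ ≥ ∑ ρ, bump (ε ρ) (⟪(0:ℝ) • v, u ρ⟫ - c ρ)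
        rw [zero_smul, hzero]
        exact hδ.1.le
      · show δ ≤ ∑ ρ, bump (ε ρ) (⟪T • v, u ρ⟫ - c ρ)
        linarith [hδ.2]
    obtain ⟨t, htIcc, htδ⟩ := hivt hδmem
    -- strict monotonicity starting from a point with value δ
    have strict : ∀ t₁ t₂ : ℝ, 0 ≤ t₁ → t₁ < t₂ →
        (∀ ρ, c ρ ≤ ⟪t₂ • v, u ρ⟫) →
        (∑ ρ, bump (ε ρ) (⟪t₁ • v, u ρ⟫ - c ρ)) = δ →
        (∑ ρ, bump (ε ρ) (⟪t₁ • v, u ρ⟫ - c ρ)) < ∑ ρ, bump (ε ρ) (⟪t₂ • v, u ρ⟫ - c ρ) := by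
      intro t₁ t₂ ht₁ h12 hP2 hδ1
      have ht₁pos : 0 < t₁ := by
        rcases ht₁.lt_or_eq with h1 | h1
        · exact h1
        · exfalso
          rw [← h1, zero_smul] at hδ1
          rw [hzero] at hδ1
          exact hδ.1.ne hδ1
      have hex : ∃ ρ, 0 < bump (ε ρ) (⟪t₁ • v, u ρ⟫ - c ρ) := by
        by_contra hcon
        push_neg at hcon
        have hz : ∑ ρ, bump (ε ρ) (⟪t₁ • v, u ρ⟫ - c ρ) = 0 :=
          Finset.sum_eq_zero fun ρ _ => le_antisymm (hcon ρ) (bump_nonneg _ _)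
        rw [hz] at hδ1
        exact hδ.1.ne hδ1
      obtain ⟨ρ₀, hρ₀⟩ := hex
      have hlt : ⟪t₁ • v, u ρ₀⟫ - c ρ₀ < ε ρ₀ := by
        by_contra hge
        rw [bump_of_le (not_lt.1 hge)] at hρ₀
        exact lt_irrefl 0 hρ₀
      rw [hrw] at hlt
      have ha : ⟪v, u ρ₀⟫ < 0 := by
        by_contra hge
        push_neg at hge
        have := mul_nonneg ht₁ hge
        linarith [hεle ρ₀]
      apply Finset.sum_lt_sum (fun ρ _ => mono v t₁ t₂ ht₁ h12.le hP2 ρ)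
      refine ⟨ρ₀, Finset.mem_univ _, ?_⟩
      rw [hrw, hrw]
      have hx2 : c ρ₀ ≤ t₂ * ⟪v, u ρ₀⟫ := by
        have := hP2 ρ₀; rwa [hrw] at this
      apply bump_lt (hεpos ρ₀) (by linarith)
        (by nlinarith [mul_pos (sub_pos.2 h12) (neg_pos.2 ha)]) hlt
    -- uniqueness
    refine ⟨t, ⟨htIcc.1, hmaps htIcc, htδ⟩, ?_⟩
    have uniq : ∀ s₁ s₂ : ℝ,
        (0 ≤ s₁ ∧ (∀ ρ, c ρ ≤ ⟪s₁ • v, u ρ⟫) ∧ (∑ ρ, bump (ε ρ) (⟪s₁ • v, u ρ⟫ - c ρ)) = δ) →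
        (0 ≤ s₂ ∧ (∀ ρ, c ρ ≤ ⟪s₂ • v, u ρ⟫) ∧ (∑ ρ, bump (ε ρ) (⟪s₂ • v, u ρ⟫ - c ρ)) = δ) →
        s₁ = s₂ := by
      intro s₁ s₂ h1 h2
      rcases lt_trichotomy s₁ s₂ with hlt | heq | hlt
      · exfalso
        have := strict s₁ s₂ h1.1 hlt h2.2.1 h1.2.2
        rw [h1.2.2, h2.2.2] at this
        exact lt_irrefl δ this
      · exact heq
      · exfalso
        have := strict s₂ s₁ h2.1 hlt h1.2.1 h2.2.2
        rw [h1.2.2, h2.2.2] at this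
        exact lt_irrefl δ this
    exact fun t' ht' => uniq t' t ht' ⟨htIcc.1, hmaps htIcc, htδ⟩
  refine ⟨?_, ?_, ?_⟩
  · -- monotonicity
    intro v hv t₁ t₂ ht₁ h12 hP2
    exact Finset.sum_le_sum fun ρ _ => mono v t₁ t₂ ht₁ h12 hP2 ρ
  · -- existence and uniqueness
    exact key
  · -- homeomorphism with the sphere
    intro δ hδ
    have hne : ∀ m : (EuclideanSpace ℝ (Fin n)), (∑ ρ, bump (ε ρ) (⟪m, u ρ⟫ - c ρ)) = δ → m ≠ 0 := by
      intro m hm h0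
      rw [h0, hzero] at hm
      exact hδ.1.ne hm
    -- compactness of the level set
    have hLc : IsCompact {m : (EuclideanSpace ℝ (Fin n)) | (∀ ρ, c ρ ≤ ⟪m, u ρ⟫) ∧
        (∑ ρ, bump (ε ρ) (⟪m, u ρ⟫ - c ρ)) = δ} := by
      have heq : {m : (EuclideanSpace ℝ (Fin n)) | (∀ ρ, c ρ ≤ ⟪m, u ρ⟫) ∧ (∑ ρ, bump (ε ρ) (⟪m, u ρ⟫ - c ρ)) = δ}
          = {m : (EuclideanSpace ℝ (Fin n)) | ∀ ρ, c ρ ≤ ⟪m, u ρ⟫} ∩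
            (fun m : (EuclideanSpace ℝ (Fin n)) => ∑ ρ, bump (ε ρ) (⟪m, u ρ⟫ - c ρ)) ⁻¹' {δ} := by
        ext m; simp [mem_setOf_eq, mem_inter_iff, mem_preimage]
      rw [heq]
      exact hPcompact.of_isClosed_subset
        (hcont.preimage_isClosed_of_isClosed hPcompact.isClosed isClosed_singleton)
        inter_subset_left
    haveI : CompactSpace {m : (EuclideanSpace ℝ (Fin n)) // m ∈ {m : (EuclideanSpace ℝ (Fin n)) | ∀ ρ, c ρ ≤ ⟪m, u ρ⟫} ∧
        (fun m : (EuclideanSpace ℝ (Fin n)) => ∑ ρ, bump (ε ρ) (⟪m, u ρ⟫ - c ρ)) m = δ} :=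
      isCompact_iff_compactSpace.1 hLc
    set L := {m : (EuclideanSpace ℝ (Fin n)) // m ∈ {m : (EuclideanSpace ℝ (Fin n)) | ∀ ρ, c ρ ≤ ⟪m, u ρ⟫} ∧
        (fun m : (EuclideanSpace ℝ (Fin n)) => ∑ ρ, bump (ε ρ) (⟪m, u ρ⟫ - c ρ)) m = δ} with hLdef
    have hne' : ∀ m : L, ‖(m : (EuclideanSpace ℝ (Fin n)))‖ ≠ 0 :=
      fun m => norm_ne_zero_iff.2 (hne m m.2.2)
    have hmemsph : ∀ m : L, ‖(m : (EuclideanSpace ℝ (Fin n)))‖⁻¹ • (m : (EuclideanSpace ℝ (Fin n))) ∈ Metric.sphere (0 : (EuclideanSpace ℝ (Fin n))) 1 := by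
      intro m
      rw [mem_sphere_zero_iff_norm, norm_smul, norm_inv, norm_norm,
        inv_mul_cancel₀ (hne' m)]
    set f : L → Metric.sphere (0 : (EuclideanSpace ℝ (Fin n))) 1 :=
      fun m => ⟨‖(m : (EuclideanSpace ℝ (Fin n)))‖⁻¹ • (m : (EuclideanSpace ℝ (Fin n))), hmemsph m⟩ with hfdef
    have hfcont : Continuous f :=
      Continuous.subtype_mk
        (((continuous_subtype_val.norm).inv₀ hne').smul continuous_subtype_val) _
    have hinj : Function.Injective f := by
      intro m m' hmm
      have heq : ‖(m : (EuclideanSpace ℝ (Fin n)))‖⁻¹ • (m : (EuclideanSpace ℝ (Fin n))) = ‖(m' : (EuclideanSpace ℝ (Fin n)))‖⁻¹ • (m' : (EuclideanSpace ℝ (Fin n))) :=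
        congrArg Subtype.val hmm
      set w : (EuclideanSpace ℝ (Fin n)) := ‖(m : (EuclideanSpace ℝ (Fin n)))‖⁻¹ • (m : (EuclideanSpace ℝ (Fin n))) with hwdef
      have hw : ‖w‖ = 1 := mem_sphere_zero_iff_norm.1 (hmemsph m)
      have hm1 : (m : (EuclideanSpace ℝ (Fin n))) = ‖(m : (EuclideanSpace ℝ (Fin n)))‖ • w := by
        rw [hwdef, smul_smul, mul_inv_cancel₀ (hne' m), one_smul]
      have hm2 : (m' : (EuclideanSpace ℝ (Fin n))) = ‖(m' : (EuclideanSpace ℝ (Fin n)))‖ • w := by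
        rw [heq, smul_smul, mul_inv_cancel₀ (hne' m'), one_smul]
      have h1 : 0 ≤ ‖(m : (EuclideanSpace ℝ (Fin n)))‖ ∧ (∀ ρ, c ρ ≤ ⟪‖(m : (EuclideanSpace ℝ (Fin n)))‖ • w, u ρ⟫) ∧
          (∑ ρ, bump (ε ρ) (⟪‖(m : (EuclideanSpace ℝ (Fin n)))‖ • w, u ρ⟫ - c ρ)) = δ := by
        rw [← hm1]
        exact ⟨norm_nonneg _, m.2.1, m.2.2⟩
      have h2 : 0 ≤ ‖(m' : (EuclideanSpace ℝ (Fin n)))‖ ∧ (∀ ρ, c ρ ≤ ⟪‖(m' : (EuclideanSpace ℝ (Fin n)))‖ • w, u ρ⟫) ∧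
          (∑ ρ, bump (ε ρ) (⟪‖(m' : (EuclideanSpace ℝ (Fin n)))‖ • w, u ρ⟫ - c ρ)) = δ := by
        rw [← hm2]
        exact ⟨norm_nonneg _, m'.2.1, m'.2.2⟩
      have hnorm : ‖(m : (EuclideanSpace ℝ (Fin n)))‖ = ‖(m' : (EuclideanSpace ℝ (Fin n)))‖ :=
        (key w hw δ hδ).unique h1 h2
      apply Subtype.ext
      rw [hm1, hm2, hnorm]
    have hsurj : Function.Surjective f := by
      intro w
      have hw : ‖(w : (EuclideanSpace ℝ (Fin n)))‖ = 1 := mem_sphere_zero_iff_norm.1 w.2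
      obtain ⟨t, ⟨ht0, htP, htδ⟩, _⟩ := key (w : (EuclideanSpace ℝ (Fin n))) hw δ hδ
      have htpos : 0 < t := by
        rcases ht0.lt_or_eq with h1 | h1
        · exact h1
        · exfalso
          rw [← h1, zero_smul] at htδ
          rw [hzero] at htδ
          exact hδ.1.ne htδ
      refine ⟨⟨t • (w : (EuclideanSpace ℝ (Fin n))), htP, htδ⟩, ?_⟩
      apply Subtype.ext
      show ‖t • (w : (EuclideanSpace ℝ (Fin n)))‖⁻¹ • (t • (w : (EuclideanSpace ℝ (Fin n)))) = (w : (EuclideanSpace ℝ (Fin n)))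
      rw [norm_smul, hw, mul_one, Real.norm_eq_abs, abs_of_pos htpos, smul_smul,
        inv_mul_cancel₀ (ne_of_gt htpos), one_smul]
    have hbij : Function.Bijective f := ⟨hinj, hsurj⟩
    refine ⟨Continuous.homeoOfEquivCompactToT2 (f := Equiv.ofBijective f hbij) hfcont,
      fun m => rfl⟩
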